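/- If the collision graph G on {1,…,N} with edge set I is a tree (connected and with N−1 edges), then the velocity space 𝓩 = {v ∈ (ℝ^ν)^N : Σ mᵢvᵢ = 0} is the internal direct sum of the subspaces L_{i,j}, (i,j) ∈ I: these subspaces span 𝓩 and the sum of their dimensions, (N−1)ν, equals dim 𝓩. -/

import Mathlib

/-!
Each `L_{i,j}` contains the vectors `e_{i,j}(w) = baseVec m i j w`, equal to `w / mᵢ` in slot
`i`, to `-w / m_j` in slot `j` and to `0` elsewhere. They telescope,
`e_{i,j}(w) + e_{j,k}(w) = e_{i,k}(w)`, so along a path of the connected graph every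
`e_{i,i₀}(w)` lies in the sum of the edge spaces, and every `v ∈ 𝓩` equals
`∑ᵢ e_{i,i₀}(mᵢ vᵢ)`. The dimension of `𝓩` is rank–nullity for the surjection `v ↦ ∑ mᵢ vᵢ` onto `ℝ^ν`.
-/

/-- The velocity space `𝓩 = {v : ∑ mᵢ • vᵢ = 0}` of a hard ball system. -/
noncomputable def massZ (N ν : ℕ) (m : Fin N → ℝ) :
    Submodule ℝ (Fin N → EuclideanSpace ℝ (Fin ν)) :=
  LinearMap.ker (∑ l : Fin N, m l •
    (LinearMap.proj l : (Fin N → EuclideanSpace ℝ (Fin ν)) →ₗ[ℝ] EuclideanSpace ℝ (Fin ν)))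

/-- The base space `L_{i,j} = {v : v_k = 0 for k ∉ {i,j}, mᵢ • vᵢ + m_j • v_j = 0}`. -/
noncomputable def baseSpace (N ν : ℕ) (m : Fin N → ℝ) (i j : Fin N) :
    Submodule ℝ (Fin N → EuclideanSpace ℝ (Fin ν)) :=
  (⨅ k ∈ ({i, j} : Set (Fin N))ᶜ,
      LinearMap.ker (LinearMap.proj (R := ℝ)
        (φ := fun _ : Fin N => EuclideanSpace ℝ (Fin ν)) k)) ⊓
  LinearMap.ker (m i • LinearMap.proj i + m j • LinearMap.proj j :
    (Fin N → EuclideanSpace ℝ (Fin ν)) →ₗ[ℝ] EuclideanSpace ℝ (Fin ν))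

namespace HardBall

variable {N ν : ℕ} {m : Fin N → ℝ}

local notation "V" => Fin N → EuclideanSpace ℝ (Fin ν)

lemma mem_massZ {v : V} : v ∈ massZ N ν m ↔ ∑ l, m l • v l = 0 := by
  simp [massZ, LinearMap.sum_apply]

lemma mem_baseSpace {i j : Fin N} {v : V} :
    v ∈ baseSpace N ν m i j ↔
      (∀ k, k ≠ i → k ≠ j → v k = 0) ∧ m i • v i + m j • v j = 0 := by
  simp [baseSpace, Submodule.mem_iInf, not_or]

lemma baseSpace_le_massZ {i j : Fin N} (hij : i ≠ j) : baseSpace N ν m i j ≤ massZ N ν m := by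
  intro v hv
  rw [mem_baseSpace] at hv
  rw [mem_massZ, Fintype.sum_eq_add i j hij fun k hk => by rw [hv.1 k hk.1 hk.2, smul_zero]]
  exact hv.2

variable (m) in
noncomputable def baseVec (i j : Fin N) (w : EuclideanSpace ℝ (Fin ν)) : V :=
  Pi.single i ((m i)⁻¹ • w) - Pi.single j ((m j)⁻¹ • w)

lemma baseVec_self (i : Fin N) (w : EuclideanSpace ℝ (Fin ν)) : baseVec m i i w = 0 :=
  sub_self _

lemma baseVec_add_baseVec (i j k : Fin N) (w : EuclideanSpace ℝ (Fin ν)) :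
    baseVec m i j w + baseVec m j k w = baseVec m i k w :=
  sub_add_sub_cancel _ _ _

lemma baseVec_mem_baseSpace (hm : ∀ l, m l ≠ 0) {i j : Fin N} (hij : i ≠ j)
    (w : EuclideanSpace ℝ (Fin ν)) : baseVec m i j w ∈ baseSpace N ν m i j := by
  rw [mem_baseSpace]
  refine ⟨fun k hki hkj => by simp [baseVec, hki, hkj], ?_⟩
  simp [baseVec, hij, hij.symm, smul_smul, hm]

variable (ν m) in
noncomputable def edgeSpan (G : SimpleGraph (Fin N)) : Submodule ℝ V :=
  ⨆ p ∈ {p : Fin N × Fin N | G.Adj p.1 p.2}, baseSpace N ν m p.1 p.2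

lemma baseSpace_le_edgeSpan {G : SimpleGraph (Fin N)} {i j : Fin N} (h : G.Adj i j) :
    baseSpace N ν m i j ≤ edgeSpan ν m G :=
  le_iSup₂ (f := fun p (_ : G.Adj p.1 p.2) => baseSpace N ν m p.1 p.2) (i, j) h

lemma baseVec_mem_edgeSpan (hm : ∀ l, m l ≠ 0) {G : SimpleGraph (Fin N)} {i j : Fin N}
    (hij : G.Reachable i j) (w : EuclideanSpace ℝ (Fin ν)) :
    baseVec m i j w ∈ edgeSpan ν m G := by
  obtain ⟨p⟩ := hij
  induction p with
  | nil => simp [baseVec_self]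
  | cons hadj _ ih =>
    rw [← baseVec_add_baseVec _ _ _ w]
    exact add_mem (baseSpace_le_edgeSpan hadj (baseVec_mem_baseSpace hm hadj.ne w)) ih

lemma eq_sum_baseVec (hm : ∀ l, m l ≠ 0) {v : V} (hv : v ∈ massZ N ν m) (i₀ : Fin N) :
    v = ∑ i, baseVec m i i₀ (m i • v i) := by
  rw [mem_massZ] at hv
  have hsingle : ∑ i, (Pi.single i₀ ((m i₀)⁻¹ • m i • v i) : V) = 0 := by
    rw [← Pi.single_zero i₀, ← smul_zero (m i₀)⁻¹, ← hv, Finset.smul_sum]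
    exact (map_sum (AddMonoidHom.single (fun _ : Fin N => EuclideanSpace ℝ (Fin ν)) i₀) _ _).symm
  simp only [baseVec, Finset.sum_sub_distrib, inv_smul_smul₀ (hm _), Finset.univ_sum_single,
    hsingle, sub_zero]

lemma massZ_le_edgeSpan (hm : ∀ l, m l ≠ 0) {G : SimpleGraph (Fin N)} (hG : G.Connected) :
    massZ N ν m ≤ edgeSpan ν m G := by
  intro v hv
  obtain ⟨i₀⟩ := hG.nonempty
  rw [eq_sum_baseVec hm hv i₀]
  exact Submodule.sum_mem _ fun i _ => baseVec_mem_edgeSpan hm (hG i i₀) _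

lemma finrank_massZ {i₀ : Fin N} (hi₀ : m i₀ ≠ 0) :
    Module.finrank ℝ (massZ N ν m) = (N - 1) * ν := by
  set f : V →ₗ[ℝ] EuclideanSpace ℝ (Fin ν) := ∑ l, m l • LinearMap.proj l
  have hsurj : Function.Surjective f := fun x =>
    ⟨Pi.single i₀ ((m i₀)⁻¹ • x), by simp [f, LinearMap.sum_apply, Pi.single_apply, hi₀]⟩
  have hrank := LinearMap.finrank_range_add_finrank_ker f
  rw [LinearMap.range_eq_top.2 hsurj, finrank_top, Module.finrank_pi_fintype] at hrank
  simp only [finrank_euclideanSpace_fin, Finset.sum_const, Finset.card_univ, Fintype.card_fin,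
    smul_eq_mul] at hrank
  have hN : 1 ≤ N := Fin.pos i₀
  change Module.finrank ℝ (LinearMap.ker f) = _
  rw [Nat.sub_one_mul]
  omega

end HardBall

open HardBall in
theorem tree_gives_direct_sum_general
    {N ν : ℕ} (m : Fin N → ℝ) (hm : ∀ l, 0 < m l)
    (G : SimpleGraph (Fin N))
    (hconn : G.Connected) :
    (⨆ p ∈ {p : Fin N × Fin N | G.Adj p.1 p.2}, baseSpace N ν m p.1 p.2)
        = massZ N ν m ∧
    (N - 1) * ν = Module.finrank ℝ ↥(massZ N ν m) := by
  have hm₀ : ∀ l, m l ≠ 0 := fun l => (hm l).ne'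
  obtain ⟨i₀⟩ := hconn.nonempty
  refine ⟨le_antisymm ?_ (massZ_le_edgeSpan hm₀ hconn), (finrank_massZ (hm₀ i₀)).symm⟩
  exact iSup₂_le fun p hp => baseSpace_le_massZ hp.ne

/-- If the collision graph is a tree (connected with `N − 1` edges), then the base spaces
`L_{i,j}` over its edges span `𝓩` and the sum of their dimensions, `(N−1)ν`, equals
`dim 𝓩`; i.e. `𝓩` is their internal direct sum. -/
theorem tree_gives_direct_sum
    {N ν : ℕ} (hN : 2 ≤ N) (hν : 2 ≤ ν) (m : Fin N → ℝ) (hm : ∀ l, 0 < m l)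
    (G : SimpleGraph (Fin N)) [DecidableRel G.Adj]
    (hconn : G.Connected) (hcard : G.edgeFinset.card = N - 1) :
    (⨆ p ∈ {p : Fin N × Fin N | G.Adj p.1 p.2}, baseSpace N ν m p.1 p.2)
        = massZ N ν m ∧
    (N - 1) * ν = Module.finrank ℝ ↥(massZ N ν m) :=
  tree_gives_direct_sum_general m hm G hconn
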